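/- arXiv:1906.06208 — 5 statements merged into one kernel-verified Lean document; each statement's English description precedes it below -/
import Mathlib

section
/- A finite partially ordered set (X,≤) has order dimension at most 2 if and only if there exists a conjugate order on X, i.e., an order ≤_C on X whose comparability graph equals the incomparability graph of ≤. Moreover, in that case {≤ ∪ ≤_C, ≤ ∪ ≥_C} is a realizer of ≤. -/
/-- `L` is a linear extension of the partial order `≤` on `X`. -/
def IsLinExt {X : Type*} [PartialOrder X] (L : X → X → Prop) : Prop :=
  IsLinearOrder X L ∧ ∀ x y : X, x ≤ y → L x y

/-- `Lc` is a conjugate order of `≤`: a partial order whose comparability graph is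
the incomparability graph of `≤`. -/
def IsConjugate {X : Type*} [PartialOrder X] (Lc : X → X → Prop) : Prop :=
  IsPartialOrder X Lc ∧
    ∀ a b : X, a ≠ b → ((Lc a b ∨ Lc b a) ↔ (¬ a ≤ b ∧ ¬ b ≤ a))

section aux
variable {X : Type*} [PartialOrder X]

lemma conj_flip {Lc : X → X → Prop} (h : IsConjugate Lc) :
    IsConjugate (fun a b => Lc b a) := by
  obtain ⟨hpo, hcomp⟩ := h
  refine ⟨{ refl := fun a => hpo.refl a,
            trans := fun a b c hab hbc => hpo.trans _ _ _ hbc hab,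
            antisymm := fun a b hab hba => hpo.antisymm _ _ hba hab },
    fun a b hne => ?_⟩
  rw [or_comm]
  exact hcomp a b hne

lemma conj_ext {Lc : X → X → Prop} (h : IsConjugate Lc) :
    IsLinExt (fun x y => x ≤ y ∨ Lc x y) := by
  obtain ⟨hpo, hcomp⟩ := h
  refine ⟨{ refl := fun a => Or.inl le_rfl,
            trans := fun x y z hxy hyz => ?_,
            antisymm := fun x y hxy hyx => ?_,
            total := fun x y => ?_ }, fun x y hxy => Or.inl hxy⟩
  · -- transitivity
    rcases hxy with hxy | hxy <;> rcases hyz with hyz | hyz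
    · exact Or.inl (hxy.trans hyz)
    · -- x ≤ y, Lc y z
      rcases eq_or_ne x y with rfl | hxyne
      · exact Or.inr hyz
      rcases eq_or_ne y z with rfl | hyzne
      · exact Or.inl hxy
      rcases eq_or_ne x z with rfl | hxzne
      · exact absurd hxy ((hcomp x y hxyne).mp (Or.inr hyz)).1
      by_cases hle : x ≤ z
      · exact Or.inl hle
      have hzx : ¬ z ≤ x := fun hzx =>
        ((hcomp y z hyzne).mp (Or.inl hyz)).2 (hzx.trans hxy)
      rcases (hcomp x z hxzne).mpr ⟨hle, hzx⟩ with hc | hc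
      · exact Or.inr hc
      · exact absurd hxy ((hcomp x y hxyne).mp (Or.inr (hpo.trans y z x hyz hc))).1
    · -- Lc x y, y ≤ z
      rcases eq_or_ne x y with rfl | hxyne
      · exact Or.inl hyz
      rcases eq_or_ne y z with rfl | hyzne
      · exact Or.inr hxy
      rcases eq_or_ne x z with rfl | hxzne
      · exact absurd hyz ((hcomp x y hxyne).mp (Or.inl hxy)).2
      by_cases hle : x ≤ z
      · exact Or.inl hle
      have hzx : ¬ z ≤ x := fun hzx =>
        ((hcomp x y hxyne).mp (Or.inl hxy)).2 (hyz.trans hzx)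
      rcases (hcomp x z hxzne).mpr ⟨hle, hzx⟩ with hc | hc
      · exact Or.inr hc
      · exact absurd hyz ((hcomp y z hyzne).mp (Or.inr (hpo.trans z x y hc hxy))).1
    · exact Or.inr (hpo.trans _ _ _ hxy hyz)
  · -- antisymmetry
    rcases hxy with hxy | hxy <;> rcases hyx with hyx | hyx
    · exact le_antisymm hxy hyx
    · rcases eq_or_ne x y with rfl | hne
      · rfl
      · exact absurd hxy ((hcomp y x hne.symm).mp (Or.inl hyx)).2
    · rcases eq_or_ne x y with rfl | hne
      · rfl
      · exact absurd hyx ((hcomp x y hne).mp (Or.inl hxy)).2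
    · exact hpo.antisymm _ _ hxy hyx
  · -- totality
    rcases eq_or_ne x y with rfl | hne
    · exact Or.inl (Or.inl le_rfl)
    by_cases h1 : x ≤ y
    · exact Or.inl (Or.inl h1)
    by_cases h2 : y ≤ x
    · exact Or.inr (Or.inl h2)
    rcases (hcomp x y hne).mpr ⟨h1, h2⟩ with hc | hc
    · exact Or.inl (Or.inr hc)
    · exact Or.inr (Or.inr hc)

end aux

/-- Dushnik–Miller: a finite poset has order dimension at most 2
(i.e., is the intersection of two linear extensions) iff a conjugate order exists;
moreover, for any conjugate order Lc, {≤ ∪ Lc, ≤ ∪ Lc⁻¹} is a realizer of ≤. -/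
theorem stmt_5 {X : Type*} [Fintype X] [PartialOrder X] :
    ((∃ L1 L2 : X → X → Prop, IsLinExt L1 ∧ IsLinExt L2 ∧
        ∀ x y : X, x ≤ y ↔ (L1 x y ∧ L2 x y)) ↔
      (∃ Lc : X → X → Prop, IsConjugate Lc))
    ∧ ∀ Lc : X → X → Prop, IsConjugate Lc →
        (IsLinExt (fun x y => x ≤ y ∨ Lc x y) ∧
         IsLinExt (fun x y => x ≤ y ∨ Lc y x) ∧
         ∀ x y : X, x ≤ y ↔ ((x ≤ y ∨ Lc x y) ∧ (x ≤ y ∨ Lc y x))) := by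
  have key : ∀ Lc : X → X → Prop, IsConjugate Lc →
      (IsLinExt (fun x y => x ≤ y ∨ Lc x y) ∧
       IsLinExt (fun x y => x ≤ y ∨ Lc y x) ∧
       ∀ x y : X, x ≤ y ↔ ((x ≤ y ∨ Lc x y) ∧ (x ≤ y ∨ Lc y x))) := by
    intro Lc hLc
    refine ⟨conj_ext hLc, conj_ext (conj_flip hLc), fun x y => ?_⟩
    constructor
    · exact fun h => ⟨Or.inl h, Or.inl h⟩
    · rintro ⟨hx | hx, hy | hy⟩
      · exact hx
      · exact hx
      · exact hy
      · exact (hLc.1.antisymm _ _ hx hy) ▸ le_rfl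
  refine ⟨⟨?_, ?_⟩, key⟩
  · rintro ⟨L1, L2, ⟨h1lin, h1ext⟩, ⟨h2lin, h2ext⟩, hreal⟩
    refine ⟨fun a b => a = b ∨ (L1 a b ∧ L2 b a),
      { refl := fun a => Or.inl rfl,
        trans := fun a b c hab hbc => ?_,
        antisymm := fun a b hab hba => ?_ },
      fun a b hne => ⟨?_, ?_⟩⟩
    · rcases hab with rfl | hab
      · exact hbc
      rcases hbc with rfl | hbc
      · exact Or.inr hab
      exact Or.inr ⟨h1lin.trans _ _ _ hab.1 hbc.1, h2lin.trans _ _ _ hbc.2 hab.2⟩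
    · rcases hab with rfl | hab
      · rfl
      rcases hba with rfl | hba
      · rfl
      exact h1lin.antisymm _ _ hab.1 hba.1
    · rintro (hab | hab)
      · rcases hab with rfl | hab
        · exact absurd rfl hne
        refine ⟨fun hle => hne ?_, fun hle => hne ?_⟩
        · exact h2lin.antisymm _ _ ((hreal a b).mp hle).2 hab.2
        · exact h1lin.antisymm _ _ hab.1 ((hreal b a).mp hle).1
      · rcases hab with rfl | hab
        · exact absurd rfl hne
        refine ⟨fun hle => hne ?_, fun hle => hne ?_⟩
        · exact h1lin.antisymm _ _ ((hreal a b).mp hle).1 hab.1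
        · exact h2lin.antisymm _ _ hab.2 ((hreal b a).mp hle).2
    · rintro ⟨hnab, hnba⟩
      rcases h1lin.total a b with h1 | h1
      · rcases h2lin.total a b with h2 | h2
        · exact absurd ((hreal a b).mpr ⟨h1, h2⟩) hnab
        · exact Or.inl (Or.inr ⟨h1, h2⟩)
      · rcases h2lin.total b a with h2 | h2
        · exact absurd ((hreal b a).mpr ⟨h1, h2⟩) hnba
        · exact Or.inr (Or.inr ⟨h1, h2⟩)
  · rintro ⟨Lc, hLc⟩
    obtain ⟨he1, he2, hint⟩ := key Lc hLc
    exact ⟨_, _, he1, he2, hint⟩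
end

section
/- Let (X,≤) be a finite ordered set, and let C ⊆ inc(X,≤) be such that the set inc(X,≤) \ C⁻¹ can be partitioned into two sets P₁, P₂ each containing no two incompatible pairs, and C is minimal with respect to set inclusion among sets with this property. Then for any incomparable pairs (a,b) ∉ C⁻¹ with (a,b)→(c,d), we have (c,d) ∉ C⁻¹. -/
/-- The set of ordered incomparable pairs of the poset. -/
def IncPairs (X : Type*) [PartialOrder X] : Set (X × X) :=
  {p | ¬ p.1 ≤ p.2 ∧ ¬ p.2 ≤ p.1}

/-- `S⁻¹ = {(b,a) : (a,b) ∈ S}`. -/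
def InvRel {X : Type*} (S : Set (X × X)) : Set (X × X) := {p | (p.2, p.1) ∈ S}

/-- Pairs (a,b) and (c,d) are incompatible iff d ≤ a and b ≤ c
(adjacency in the transitive incompatibility graph tig(X,≤)). -/
def Incomp {X : Type*} [PartialOrder X] (p q : X × X) : Prop :=
  q.2 ≤ p.1 ∧ p.2 ≤ q.1

/-- The transitive incompatibility graph restricted to `IncPairs X \ InvRel C` is
bipartite: its vertices split into two sets containing no incompatible pair. -/
def GoodPartition (X : Type*) [PartialOrder X] (C : Set (X × X)) : Prop :=
  ∃ P1 P2 : Set (X × X), P1 ∪ P2 = IncPairs X \ InvRel C ∧ Disjoint P1 P2 ∧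
    (∀ p ∈ P1, ∀ q ∈ P1, ¬ Incomp p q) ∧ (∀ p ∈ P2, ∀ q ∈ P2, ¬ Incomp p q)

/-- if C ⊆ inc(X,≤) is inclusion-minimal such that tig(X,≤) minus C⁻¹
is bipartite, then enforcing propagates avoidance of C⁻¹: if (a,b) ∉ C⁻¹ and
(a,b)→(c,d) (i.e., c ≤ a and b ≤ d), then (c,d) ∉ C⁻¹. -/
theorem stmt_10 {X : Type*} [Fintype X] [PartialOrder X] (C : Set (X × X))
    (hC : C ⊆ IncPairs X) (hgood : GoodPartition X C)
    (hmin : ∀ C' ⊆ C, GoodPartition X C' → C' = C)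
    (a b c d : X) (h1 : (a, b) ∈ IncPairs X) (h2 : (c, d) ∈ IncPairs X)
    (h3 : (a, b) ∉ InvRel C) (henf : c ≤ a ∧ b ≤ d) :
    (c, d) ∉ InvRel C := by
  intro hcd
  obtain ⟨P1, P2, hunion, hdisj, hP1, hP2⟩ := hgood
  set C' : Set (X × X) := C \ {(d, c)} with hC'def
  -- the complement sets
  have hinv : InvRel C' = InvRel C \ {(c, d)} := by
    ext p
    simp only [InvRel, hC'def, Set.mem_diff, Set.mem_setOf_eq, Set.mem_singleton_iff,
      Prod.ext_iff]
    tauto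
  have hcomp : IncPairs X \ InvRel C' = insert (c, d) (IncPairs X \ InvRel C) := by
    rw [hinv]
    ext p
    simp only [Set.mem_diff, Set.mem_insert_iff, Set.mem_singleton_iff]
    constructor
    · rintro ⟨hp, hnp⟩
      by_cases hpe : p = (c, d)
      · exact Or.inl hpe
      · exact Or.inr ⟨hp, fun h => hnp ⟨h, hpe⟩⟩
    · rintro (rfl | ⟨hp, hnp⟩)
      · exact ⟨h2, fun h => h.2 rfl⟩
      · exact ⟨hp, fun h => hnp h.1⟩
  -- incompatibility with (c,d) transfers to (a,b)
  have htrans : ∀ q : X × X, Incomp (c, d) q → Incomp (a, b) q := by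
    rintro q ⟨hq1, hq2⟩
    exact ⟨hq1.trans henf.1, henf.2.trans hq2⟩
  have hsymm : ∀ p q : X × X, Incomp p q → Incomp q p := by
    rintro p q ⟨h₁, h₂⟩; exact ⟨h₂, h₁⟩
  have hcdP : (c, d) ∉ P1 ∪ P2 := by
    rw [hunion]; exact fun h => h.2 hcd
  -- key construction: insert (c,d) into the part containing (a,b)
  have key : ∀ P Q : Set (X × X), P ∪ Q = IncPairs X \ InvRel C → Disjoint P Q →
      (∀ p ∈ P, ∀ q ∈ P, ¬ Incomp p q) → (∀ p ∈ Q, ∀ q ∈ Q, ¬ Incomp p q) →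
      (a, b) ∈ P → (c, d) ∉ P ∪ Q → GoodPartition X C' := by
    intro P Q hu hd hP hQ habP hcdPQ
    refine ⟨insert (c, d) P, Q, ?_, ?_, ?_, hQ⟩
    · rw [Set.insert_union, hu, hcomp]
    · rw [Set.disjoint_left]
      rintro p (rfl | hp) hpQ
      · exact hcdPQ (Or.inr hpQ)
      · exact hd.le_bot ⟨hp, hpQ⟩
    · rintro p hp q hq hpq
      rcases hp with rfl | hp <;> rcases hq with rfl | hq
      · exact h2.2 hpq.1
      · exact hP _ habP _ hq (htrans _ hpq)
      · exact hP _ habP _ hp (htrans _ (hsymm _ _ hpq))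
      · exact hP _ hp _ hq hpq
  have hab : (a, b) ∈ P1 ∪ P2 := by rw [hunion]; exact ⟨h1, h3⟩
  have hgood' : GoodPartition X C' := by
    rcases hab with h | h
    · exact key P1 P2 hunion hdisj hP1 hP2 h hcdP
    · exact key P2 P1 (by rw [Set.union_comm]; exact hunion) hdisj.symm hP2 hP1 h
        (fun hh => hcdP hh.symm)
  have := hmin C' Set.diff_subset hgood'
  have hdc : (d, c) ∈ C := hcd
  have : (d, c) ∈ C' := this ▸ hdc
  exact this.2 rfl
end

section
/- Let (X,≤) be a finite ordered set, and let C ⊆ inc(X,≤) be inclusion-minimal such that the transitive incompatibility graph restricted to inc(X,≤) \ C⁻¹ is bipartite. Then C is antisymmetric on incomparable pairs: if (x,y) ∈ C then (y,x) ∉ C. -/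
lemma incomp_symm {X : Type*} [PartialOrder X] {p q : X × X} (h : Incomp p q) :
    Incomp q p := ⟨h.2, h.1⟩

/-- If the new vertex `w` has no neighbor in `P1`, we may add it to `P1`,
giving a good partition for `C` with `(w.2, w.1)` removed. -/
lemma extend_partition {X : Type*} [PartialOrder X] (C : Set (X × X))
    (P1 P2 : Set (X × X))
    (hU : P1 ∪ P2 = IncPairs X \ InvRel C) (hD : Disjoint P1 P2)
    (h1 : ∀ p ∈ P1, ∀ q ∈ P1, ¬ Incomp p q) (h2 : ∀ p ∈ P2, ∀ q ∈ P2, ¬ Incomp p q)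
    (w : X × X) (hw : w ∈ IncPairs X) (hwC : (w.2, w.1) ∈ C)
    (hwP : ∀ p ∈ P1, ¬ Incomp w p) :
    GoodPartition X (C \ {(w.2, w.1)}) := by
  have hwV : w ∉ P1 ∪ P2 := by
    rw [hU]
    intro hmem
    exact hmem.2 hwC
  refine ⟨insert w P1, P2, ?_, ?_, ?_, h2⟩
  · ext p
    have hp : p ∈ P1 ∪ P2 ↔ p ∈ IncPairs X \ InvRel C := by rw [hU]
    constructor
    · rintro (h | h)
      · rcases h with rfl | h
        · refine ⟨hw, ?_⟩
          intro hmem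
          exact hmem.2 (by simp [Prod.ext_iff])
        · have := hp.1 (Or.inl h)
          exact ⟨this.1, fun hmem => this.2 hmem.1⟩
      · have := hp.1 (Or.inr h)
        exact ⟨this.1, fun hmem => this.2 hmem.1⟩
    · rintro ⟨hpi, hpc⟩
      by_cases hpw : p = w
      · exact Or.inl (Or.inl hpw)
      · have hpC : p ∉ InvRel C := by
          intro hmem
          apply hpc
          refine ⟨hmem, ?_⟩
          simp only [Set.mem_singleton_iff, Prod.ext_iff] at *
          intro ⟨ha, hb⟩
          exact hpw ⟨hb, ha⟩
        rcases hp.2 ⟨hpi, hpC⟩ with h | h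
        · exact Or.inl (Or.inr h)
        · exact Or.inr h
  · rw [Set.disjoint_left]
    rintro a (rfl | ha) hb
    · exact hwV (Or.inr hb)
    · exact Set.disjoint_left.mp hD ha hb
  · rintro p (rfl | hp) q (rfl | hq)
    · intro h
      exact hw.2 h.1
    · exact hwP q hq
    · intro h
      exact hwP p hp (incomp_symm h)
    · exact h1 p hp q hq

/-- if C ⊆ inc(X,≤) is inclusion-minimal such that tig(X,≤) minus C⁻¹
is bipartite, then C is antisymmetric: (x,y) ∈ C implies (y,x) ∉ C. -/
theorem stmt_11 {X : Type*} [Fintype X] [PartialOrder X] (C : Set (X × X))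
    (hC : C ⊆ IncPairs X) (hgood : GoodPartition X C)
    (hmin : ∀ C' ⊆ C, GoodPartition X C' → C' = C) :
    ∀ x y : X, (x, y) ∈ C → (y, x) ∉ C := by
  intro x y hxy hyx
  obtain ⟨P1, P2, hU, hD, h1, h2⟩ := hgood
  have hxyI : (x, y) ∈ IncPairs X := hC hxy
  have hyxI : (y, x) ∈ IncPairs X := hC hyx
  by_cases hu : ∀ p ∈ P1, ¬ Incomp (x, y) p
  · have hgp := extend_partition C P1 P2 hU hD h1 h2 (x, y) hxyI hyx hu
    have heq := hmin _ Set.diff_subset hgp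
    rw [← heq] at hyx
    exact hyx.2 rfl
  · by_cases hv : ∀ p ∈ P1, ¬ Incomp (y, x) p
    · have hgp := extend_partition C P1 P2 hU hD h1 h2 (y, x) hyxI hxy hv
      have heq := hmin _ Set.diff_subset hgp
      rw [← heq] at hxy
      exact hxy.2 rfl
    · push_neg at hu hv
      obtain ⟨p, hp, hup⟩ := hu
      obtain ⟨q, hq, hvq⟩ := hv
      exact h1 p hp q hq ⟨le_trans hvq.1 hup.2, le_trans hup.1 hvq.2⟩
end

section
/- Let (X,≤) be a finite poset. Then (X,≤) has order dimension at most 2 if and only if the transitive incompatibility graph tig(X,≤) is bipartite. -/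
namespace DDFGH

variable {V : Type*}

/-- Reverse of an ordered pair. -/
def inve (e : V × V) : V × V := (e.2, e.1)

@[simp] lemma inve_inve (e : V × V) : inve (inve e) = e := rfl

@[simp] lemma inve_fst (e : V × V) : (inve e).1 = e.2 := rfl
@[simp] lemma inve_snd (e : V × V) : (inve e).2 = e.1 := rfl

section Graph

variable (adj : V → V → Prop)

/-- Γ-step between oriented edges (Golumbic's forcing relation). -/
def GStep (e f : V × V) : Prop :=
  adj e.1 e.2 ∧ adj f.1 f.2 ∧
    ((e.1 = f.1 ∧ ¬ adj e.2 f.2) ∨ (e.2 = f.2 ∧ ¬ adj e.1 f.1))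

/-- Γ-equivalence (implication classes). -/
def GEq (e f : V × V) : Prop := Relation.ReflTransGen (GStep adj) e f

/-- All implication classes are proper. -/
def Proper : Prop := ∀ u v : V, adj u v → ¬ GEq adj (u, v) (v, u)

variable {adj}

lemma GStep.symm (hs : Symmetric adj) {e f : V × V} (h : GStep adj e f) : GStep adj f e := by
  obtain ⟨he, hf, hd⟩ := h
  refine ⟨hf, he, ?_⟩
  rcases hd with ⟨h1, h2⟩ | ⟨h1, h2⟩
  · exact Or.inl ⟨h1.symm, fun hh => h2 (hs hh)⟩
  · exact Or.inr ⟨h1.symm, fun hh => h2 (hs hh)⟩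

lemma GEq.symm (hs : Symmetric adj) {e f : V × V} (h : GEq adj e f) : GEq adj f e :=
  (@Relation.ReflTransGen.stdSymm _ _ ⟨fun _ _ hh => GStep.symm hs hh⟩).symm _ _ h

lemma GEq.trans {e f g : V × V} (h1 : GEq adj e f) (h2 : GEq adj f g) : GEq adj e g :=
  Relation.ReflTransGen.trans h1 h2

lemma GEq.refl {e : V × V} : GEq adj e e := Relation.ReflTransGen.refl

lemma GStep.inve (hs : Symmetric adj) {e f : V × V} (h : GStep adj e f) :
    GStep adj (inve e) (inve f) := by
  obtain ⟨he, hf, hd⟩ := h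
  refine ⟨hs he, hs hf, ?_⟩
  rcases hd with ⟨h1, h2⟩ | ⟨h1, h2⟩
  · exact Or.inr ⟨h1, h2⟩
  · exact Or.inl ⟨h1, h2⟩

lemma GEq.inve (hs : Symmetric adj) {e f : V × V} (h : GEq adj e f) :
    GEq adj (inve e) (inve f) := by
  induction h with
  | refl => exact .refl
  | tail _ hstep ih => exact ih.tail (hstep.inve hs)

/-- Edges propagate along Γ-equivalence. -/
lemma GEq.edge {e f : V × V} (h : GEq adj e f) (he : adj e.1 e.2) : adj f.1 f.2 := by
  induction h with
  | refl => exact he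
  | tail _ hstep _ => exact hstep.2.1

/-- The apex-walk lemma: the engine of all arguments. -/
lemma apex_walk (hs : Symmetric adj) {e₀ e₁ : V × V} (hw : GEq adj e₀ e₁)
    {a : V} (h1 : adj a e₀.1) (h2 : adj a e₀.2) :
    (adj a e₁.1 ∧ adj a e₁.2 ∧
      GEq adj (a, e₀.1) (a, e₁.1) ∧ GEq adj (a, e₀.2) (a, e₁.2)) ∨
    GEq adj e₀ (a, e₀.2) ∨ GEq adj e₀ (e₀.1, a) := by
  induction hw with
  | refl => exact Or.inl ⟨h1, h2, .refl, .refl⟩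
  | @tail b c hb hstep ih =>
    rcases ih with ⟨hb1, hb2, g1, g2⟩ | hrest
    · have hb0c : GEq adj e₀ c := hb.tail hstep
      obtain ⟨hbe, hce, hd⟩ := hstep
      rcases hd with ⟨hfst, hnadj⟩ | ⟨hsnd, hnadj⟩
      · -- shared first coordinate, second changes b.2 ↝ c.2
        by_cases hac : adj a c.2
        · refine Or.inl ⟨hfst ▸ hb1, hac, hfst ▸ g1, g2.tail ?_⟩
          exact ⟨hb2, hac, Or.inl ⟨rfl, hnadj⟩⟩
        · -- outcome (iii)
          right; right
          have hstep2 : GStep adj (a, b.1) (c.2, b.1) := by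
            refine ⟨hb1, ?_, Or.inr ⟨rfl, hac⟩⟩
            exact hs (hfst ▸ hce)
          have : GEq adj (a, e₀.1) (c.2, b.1) := g1.tail hstep2
          have hinv : GEq adj (e₀.1, a) (b.1, c.2) := this.inve hs
          have hcc : (b.1, c.2) = c := by rw [hfst]
          exact hb0c.trans ((hcc ▸ hinv).symm hs)
      · -- shared second coordinate, first changes b.1 ↝ c.1
        by_cases hac : adj a c.1
        · refine Or.inl ⟨hac, hsnd ▸ hb2, g1.tail ?_, hsnd ▸ g2⟩
          exact ⟨hb1, hac, Or.inl ⟨rfl, hnadj⟩⟩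
        · -- outcome (ii)
          right; left
          have hstep2 : GStep adj (a, b.2) (c.1, b.2) := by
            refine ⟨hb2, ?_, Or.inr ⟨rfl, hac⟩⟩
            exact hsnd ▸ hce
          have : GEq adj (a, e₀.2) (c.1, b.2) := g2.tail hstep2
          have hcc : (c.1, b.2) = c := by rw [hsnd]
          exact hb0c.trans ((hcc ▸ this).symm hs)
    · exact Or.inr hrest

/-- Implication classes are transitive (Golumbic Lemma 5.4). -/
lemma class_trans (hs : Symmetric adj) (hi : ∀ v, ¬ adj v v) (hp : Proper adj)
    {a b c : V} (hab : adj a b) (hbc : adj b c) (h : GEq adj (a, b) (b, c)) :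
    adj a c ∧ GEq adj (a, b) (a, c) := by
  have hac : adj a c := by
    by_contra hac
    have hstep : GStep adj (b, c) (b, a) := by
      refine ⟨hbc, hs hab, Or.inl ⟨rfl, fun hh => hac (hs hh)⟩⟩
    exact hp a b hab (h.trans (Relation.ReflTransGen.single hstep))
  refine ⟨hac, ?_⟩
  have := apex_walk hs (h.symm hs) (a := a) hab hac
  rcases this with ⟨habs, _, _, _⟩ | hout | hout
  · exact absurd habs (hi a)
  · -- (b,c) ≈ (a, c)
    exact h.trans hout
  · -- (b,c) ≈ (b, a) : contradiction
    exact absurd (h.trans hout) (hp a b hab)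


end Graph

section Hat

variable {adj : V → V → Prop} (s t : V)

variable (adj) in
/-- Membership in the color class of the edge (s,t). -/
def InHat (e : V × V) : Prop := GEq adj e (s, t) ∨ GEq adj e (t, s)

variable (adj) in
def IsApex (x : V) : Prop :=
  adj x s ∧ adj x t ∧ ¬ InHat adj s t (x, s) ∧ ¬ InHat adj s t (x, t)

variable (adj) in
def IsJump (g h : V × V) : Prop :=
  ∃ x, IsApex adj s t x ∧
    ((g = (x, s) ∧ h = (x, t)) ∨ (g = (x, t) ∧ h = (x, s)) ∨
     (g = (s, x) ∧ h = (t, x)) ∨ (g = (t, x) ∧ h = (s, x)))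

variable (adj) in
def Chain : ℕ → (V × V) → (V × V) → Prop
  | 0, e, f => GEq adj e f
  | n + 1, e, f => ∃ g h, GEq adj e g ∧ IsJump adj s t g h ∧ Chain n h f

variable {s t}

lemma InHat.swap {e : V × V} (h : InHat adj s t e) : InHat adj t s e := h.symm

lemma InHat.inve (hs : Symmetric adj) {e : V × V} (h : InHat adj s t e) :
    InHat adj s t (DDFGH.inve e) := by
  rcases h with h | h
  · exact Or.inr (h.inve hs)
  · exact Or.inl (h.inve hs)

lemma InHat.of_geq (hs : Symmetric adj) {e f : V × V} (hg : GEq adj e f)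
    (h : InHat adj s t f) : InHat adj s t e := by
  rcases h with h | h
  · exact Or.inl (hg.trans h)
  · exact Or.inr (hg.trans h)

lemma InHat.of_geq' (hs : Symmetric adj) {e f : V × V} (h : InHat adj s t e)
    (hg : GEq adj e f) : InHat adj s t f := by
  rcases h with h | h
  · exact Or.inl ((hg.symm hs).trans h)
  · exact Or.inr ((hg.symm hs).trans h)

lemma IsApex.swap {x : V} (h : IsApex adj s t x) : IsApex adj t s x :=
  ⟨h.2.1, h.1, fun hh => h.2.2.2 hh.swap, fun hh => h.2.2.1 hh.swap⟩

lemma IsJump.swap {g h : V × V} (hj : IsJump adj s t g h) : IsJump adj t s g h := by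
  obtain ⟨x, hap, hsh⟩ := hj
  refine ⟨x, hap.swap, ?_⟩
  tauto

lemma IsJump.inve (hs : Symmetric adj) {g h : V × V} (hj : IsJump adj s t g h) :
    IsJump adj s t (DDFGH.inve g) (DDFGH.inve h) := by
  obtain ⟨x, hap, hsh⟩ := hj
  refine ⟨x, hap, ?_⟩
  rcases hsh with ⟨rfl, rfl⟩ | ⟨rfl, rfl⟩ | ⟨rfl, rfl⟩ | ⟨rfl, rfl⟩ <;> simp [DDFGH.inve] <;> tauto

lemma Chain.swap : ∀ {n : ℕ} {e f : V × V}, Chain adj s t n e f → Chain adj t s n e f := by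
  intro n
  induction n with
  | zero => exact fun h => h
  | succ n ih =>
    rintro e f ⟨g, h, hg, hj, hc⟩
    exact ⟨g, h, hg, hj.swap, ih hc⟩

lemma Chain.inve (hs : Symmetric adj) :
    ∀ {n : ℕ} {e f : V × V}, Chain adj s t n e f →
      Chain adj s t n (DDFGH.inve e) (DDFGH.inve f) := by
  intro n
  induction n with
  | zero => exact fun h => GEq.inve hs h
  | succ n ih =>
    rintro e f ⟨g, h, hg, hj, hc⟩
    exact ⟨_, _, hg.inve hs, hj.inve hs, ih hc⟩

lemma Chain.lift {n : ℕ} {e e' f : V × V} (hg : GEq adj e' e) (h : Chain adj s t n e f) :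
    Chain adj s t n e' f := by
  cases n with
  | zero => exact GEq.trans hg h
  | succ n => obtain ⟨g, hh, h1, h2, h3⟩ := h; exact ⟨g, hh, hg.trans h1, h2, h3⟩

lemma Chain.snoc : ∀ {n : ℕ} {e f g : V × V}, Chain adj s t n e f → GEq adj f g →
    Chain adj s t n e g := by
  intro n
  induction n with
  | zero => exact fun h hg => GEq.trans h hg
  | succ n ih =>
    rintro e f g ⟨u, v, h1, h2, h3⟩ hg
    exact ⟨u, v, h1, h2, ih h3 hg⟩

lemma Chain.addJump : ∀ {n : ℕ} {e f g h c : V × V}, Chain adj s t n e f → GEq adj f g →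
    IsJump adj s t g h → GEq adj h c → Chain adj s t (n + 1) e c := by
  intro n
  induction n with
  | zero =>
    intro e f g h c h1 h2 h3 h4
    exact ⟨g, h, h1.trans h2, h3, h4⟩
  | succ n ih =>
    rintro e f g h c ⟨u, v, h1, h2, h3⟩ hg hj hc
    exact ⟨u, v, h1, h2, ih h3 hg hj hc⟩

end Hat

section Collapse

variable {adj : V → V → Prop}

lemma noflip_core (hs : Symmetric adj) (hi : ∀ v, ¬ adj v v) (hp : Proper adj)
    (n : ℕ)
    (IH : ∀ m, m ≤ n → ∀ (s' t' : V) (e' : V × V), adj s' t' → adj e'.1 e'.2 →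
      Chain adj s' t' m e' (inve e') → False)
    (s t x : V) (e : V × V) (hst : adj s t) (he : adj e.1 e.2)
    (hap : IsApex adj s t x) (heg : GEq adj e (x, s))
    (hch : Chain adj s t n (x, t) (inve e)) : False := by
  obtain ⟨hxs, hxt, hhs, hht⟩ := hap
  cases n with
  | zero =>
    -- m = 1 analysis
    have hch' : GEq adj (x, t) (inve e) := hch
    have hw : GEq adj (x, s) (t, x) := by
      have h1 : GEq adj (x, s) e := heg.symm hs
      have h2 : GEq adj (t, x) e := by
        have := hch'.inve hs; rwa [inve_inve] at this
      exact h1.trans (h2.symm hs)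
    have := apex_walk hs hw (a := t) (hs hxt) (hs hst)
    rcases this with ⟨habs, _, _, _⟩ | hout | hout
    · exact hi t habs
    · exact hhs (Or.inr hout)
    · -- (x,s) ≈ (x,t) : e ≈ inve e
      have hEe : GEq adj e (inve e) := heg.trans (hout.trans hch')
      exact hp e.1 e.2 he hEe
  | succ n' =>
    obtain ⟨g₂, h₂, h12, ⟨y, hap2, hshape⟩, hch2⟩ := hch
    have hIH : ∀ m, m ≤ n' → ∀ (s' t' : V) (e' : V × V), adj s' t' → adj e'.1 e'.2 →
        Chain adj s' t' m e' (inve e') → False :=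
      fun m hm => IH m (hm.trans (Nat.le_succ n'))
    have hawl := apex_walk hs h12 (a := s) (hs hxs) hst
    -- the shorten-by-one move, common to all shapes (outcome (iii))
    have shorten : GEq adj (x, t) (x, s) → False := by
      intro hout
      have hech : Chain adj s t (n' + 1) e (inve e) :=
        ⟨g₂, h₂, heg.trans ((hout.symm hs).trans h12), ⟨y, hap2, hshape⟩, hch2⟩
      exact IH (n' + 1) le_rfl s t e hst he hech
    rcases hshape with ⟨rfl, rfl⟩ | ⟨rfl, rfl⟩ | ⟨rfl, rfl⟩ | ⟨rfl, rfl⟩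
    · -- g₂ = (y,s)
      rcases hawl with ⟨_, habs, _, _⟩ | hout | hout
      · exact hi s habs
      · exact hht (Or.inl hout)
      · exact shorten hout
    · -- g₂ = (y,t) : transport
      rcases hawl with ⟨_, _, q1, _⟩ | hout | hout
      · -- q1 : GEq (s,x) (s,y); h₂ = (y,s)
        have : GEq adj (x, s) (y, s) := by simpa [inve] using q1.inve hs
        exact hIH n' le_rfl s t e hst he (hch2.lift (heg.trans this))
      · exact hht (Or.inl hout)
      · exact shorten hout
    · -- g₂ = (s,y)
      rcases hawl with ⟨habs, _, _, _⟩ | hout | hout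
      · exact hi s habs
      · exact hht (Or.inl hout)
      · exact shorten hout
    · -- g₂ = (t,y)
      rcases hawl with ⟨_, _, q1, _⟩ | hout | hout
      · -- q1 : GEq (s,x) (s,t) : (x,s) ∈ hat
        have : InHat adj s t (x, s) := by
          have := InHat.inve hs (Or.inl q1 : InHat adj s t (s, x))
          simpa [inve] using this
        exact hhs this
      · exact hht (Or.inl hout)
      · exact shorten hout

lemma noflip (hs : Symmetric adj) (hi : ∀ v, ¬ adj v v) (hp : Proper adj) :
    ∀ (n : ℕ) (s t : V) (e : V × V), adj s t → adj e.1 e.2 →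
      Chain adj s t n e (inve e) → False := by
  intro n
  induction n using Nat.strong_induction_on with
  | _ n IH =>
    match n with
    | 0 =>
      intro s t e _ he h
      have h' : GEq adj (e.1, e.2) ((e.1, e.2).2, (e.1, e.2).1) := h
      exact hp e.1 e.2 he h'
    | Nat.succ m =>
      rintro s t e hst he ⟨g₁, h₁, heg, ⟨x, hap, hshape⟩, hch⟩
      have hIH : ∀ k, k ≤ m → ∀ (s' t' : V) (e' : V × V), adj s' t' → adj e'.1 e'.2 →
          Chain adj s' t' k e' (inve e') → False :=
        fun k hk => IH k (Nat.lt_succ_of_le hk)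
      rcases hshape with ⟨rfl, rfl⟩ | ⟨rfl, rfl⟩ | ⟨rfl, rfl⟩ | ⟨rfl, rfl⟩
      · exact noflip_core hs hi hp m hIH s t x e hst he hap heg hch
      · -- swap s and t
        exact noflip_core hs hi hp m hIH t s x e (hs hst) he hap.swap heg hch.swap
      · -- inversion
        refine noflip_core hs hi hp m hIH s t x (inve e) hst (hs he) hap
          (by simpa [inve] using heg.inve hs) ?_
        have := hch.inve hs
        simpa [inve] using this
      · -- swap + inversion
        refine noflip_core hs hi hp m hIH t s x (inve e) (hs hst) (hs he) hap.swap
          (by simpa [inve] using heg.inve hs) ?_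
        have := (hch.inve hs).swap
        simpa [inve] using this

end Collapse

section Reduction

variable {adj : V → V → Prop} {s t : V}

variable (adj s t) in
/-- The graph with the color class of (s,t) removed. -/
def SubAdj : V → V → Prop := fun u v => adj u v ∧ ¬ InHat adj s t (u, v)

lemma InHat.flip (hs : Symmetric adj) {u v : V} (h : InHat adj s t (u, v)) :
    InHat adj s t (v, u) := by
  have := h.inve hs; exact this

lemma subAdj_symm (hs : Symmetric adj) : Symmetric (SubAdj adj s t) := by
  rintro u v ⟨h1, h2⟩
  exact ⟨hs h1, fun hh => h2 (hh.flip hs)⟩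

lemma subAdj_irrefl (hi : ∀ v, ¬ adj v v) : ∀ v, ¬ SubAdj adj s t v v :=
  fun v hh => hi v hh.1

/-- Normalization of a single removed-graph step sharing the first coordinate. -/
lemma step_sub_chain_fst (hs : Symmetric adj)
    {e f : V × V} (he : adj e.1 e.2) (heh : ¬ InHat adj s t e)
    (hf : adj f.1 f.2) (hfh : ¬ InHat adj s t f)
    (h1 : e.1 = f.1) (hadj : adj e.2 f.2) (hhat : InHat adj s t (e.2, f.2)) :
    Chain adj s t 1 e f := by
  have haf : adj e.1 f.2 := h1 ▸ hf
  have hfe : f = (e.1, f.2) := by rw [h1]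
  rcases hhat with hw | hw
  · rcases apex_walk hs hw (a := e.1) he haf with ⟨has, hat, q1, q2⟩ | hout | hout
    · refine ⟨(e.1, s), (e.1, t), q1, ⟨e.1, ⟨has, hat, ?_, ?_⟩, Or.inl ⟨rfl, rfl⟩⟩, ?_⟩
      · exact fun hh => heh (InHat.of_geq hs q1 hh)
      · exact fun hh => hfh (by rw [hfe]; exact InHat.of_geq hs q2 hh)
      · show GEq adj (e.1, t) f
        rw [hfe]; exact q2.symm hs
    · -- (e.2, f.2) ≈ (e.1, f.2) : f in hat
      refine absurd ?_ hfh
      rw [hfe]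
      exact InHat.of_geq' hs (Or.inl hw : InHat adj s t (e.2, f.2)) hout
    · -- (e.2, f.2) ≈ (e.2, e.1) : inve e in hat
      have : InHat adj s t (e.2, e.1) :=
        InHat.of_geq' hs (Or.inl hw : InHat adj s t (e.2, f.2)) hout
      exact absurd (this.flip hs) heh
  · rcases apex_walk hs hw (a := e.1) he haf with ⟨hat, has, q1, q2⟩ | hout | hout
    · refine ⟨(e.1, t), (e.1, s), q1, ⟨e.1, ⟨has, hat, ?_, ?_⟩, Or.inr (Or.inl ⟨rfl, rfl⟩)⟩, ?_⟩
      · exact fun hh => hfh (by rw [hfe]; exact InHat.of_geq hs q2 hh)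
      · exact fun hh => heh (InHat.of_geq hs q1 hh)
      · show GEq adj (e.1, s) f
        rw [hfe]; exact q2.symm hs
    · refine absurd ?_ hfh
      rw [hfe]
      exact InHat.of_geq' hs (Or.inr hw : InHat adj s t (e.2, f.2)) hout
    · have : InHat adj s t (e.2, e.1) :=
        InHat.of_geq' hs (Or.inr hw : InHat adj s t (e.2, f.2)) hout
      exact absurd (this.flip hs) heh

lemma step_sub_chain (hs : Symmetric adj)
    {e f : V × V} (h : GStep (SubAdj adj s t) e f) :
    GEq adj e f ∨ Chain adj s t 1 e f := by
  obtain ⟨⟨he, heh⟩, ⟨hf, hfh⟩, hd⟩ := h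
  rcases hd with ⟨h1, h2⟩ | ⟨h1, h2⟩
  · by_cases hadj : adj e.2 f.2
    · have hhat : InHat adj s t (e.2, f.2) := by
        by_contra hco
        exact h2 ⟨hadj, hco⟩
      exact Or.inr (step_sub_chain_fst hs he heh hf hfh h1 hadj hhat)
    · exact Or.inl (Relation.ReflTransGen.single ⟨he, hf, Or.inl ⟨h1, hadj⟩⟩)
  · by_cases hadj : adj e.1 f.1
    · have hhat : InHat adj s t (e.1, f.1) := by
        by_contra hco
        exact h2 ⟨hadj, hco⟩
      have hch := step_sub_chain_fst hs (hs he) (fun hh => heh (hh.flip hs))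
        (hs hf) (fun hh => hfh (hh.flip hs)) h1 hadj hhat
      have := hch.inve hs
      exact Or.inr (by simpa [inve] using this)
    · exact Or.inl (Relation.ReflTransGen.single ⟨he, hf, Or.inr ⟨h1, hadj⟩⟩)

lemma geq_sub_chain (hs : Symmetric adj) {e f : V × V}
    (h : GEq (SubAdj adj s t) e f) : ∃ n, Chain adj s t n e f := by
  induction h with
  | refl => exact ⟨0, GEq.refl⟩
  | tail _ hstep ih =>
    obtain ⟨n, ch⟩ := ih
    rcases step_sub_chain hs hstep with hg | ⟨g, h', hbg, hj, hhc⟩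
    · exact ⟨n, ch.snoc hg⟩
    · exact ⟨n + 1, ch.addJump hbg hj hhc⟩

lemma proper_sub (hs : Symmetric adj) (hi : ∀ v, ¬ adj v v) (hp : Proper adj)
    (hst : adj s t) : Proper (SubAdj adj s t) := by
  intro u v huv hG
  obtain ⟨n, ch⟩ := geq_sub_chain hs hG
  exact noflip hs hi hp n s t (u, v) hst huv.1 ch

end Reduction

section Main

/-- Transitive orientation. -/
def IsTRO (adj : V → V → Prop) (F : Set (V × V)) : Prop :=
  (∀ e ∈ F, adj e.1 e.2) ∧ (∀ u v, adj u v → ((u, v) ∈ F ↔ (v, u) ∉ F)) ∧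
    (∀ u v w, (u, v) ∈ F → (v, w) ∈ F → (u, w) ∈ F)

lemma isTRO_empty (adj : V → V → Prop) (h : ∀ u v, ¬ adj u v) : IsTRO adj ∅ :=
  ⟨fun e he => absurd he (Set.notMem_empty e),
   fun u v huv => absurd huv (h u v),
   fun u v _ h1 => absurd h1 (Set.notMem_empty _)⟩

theorem exists_tro_aux [Fintype V] :
    ∀ (n : ℕ) (adj : V → V → Prop), {e : V × V | adj e.1 e.2}.ncard ≤ n →
      Symmetric adj → (∀ v, ¬ adj v v) → Proper adj → ∃ F, IsTRO adj F := by
  intro n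
  induction n with
  | zero =>
    intro adj hcard _ _ _
    refine ⟨∅, isTRO_empty adj fun u v huv => ?_⟩
    have h0 : {e : V × V | adj e.1 e.2}.ncard = 0 := Nat.le_zero.mp hcard
    have := (Set.ncard_eq_zero (Set.toFinite _)).mp h0
    rw [Set.eq_empty_iff_forall_notMem] at this
    exact this (u, v) huv
  | succ n IH =>
    intro adj hcard hs hi hp
    by_cases hE : ∀ u v, ¬ adj u v
    · exact ⟨∅, isTRO_empty adj hE⟩
    push_neg at hE
    obtain ⟨s, t, hst⟩ := hE
    have hs2 : Symmetric (SubAdj adj s t) := subAdj_symm hs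
    have hi2 : ∀ v, ¬ SubAdj adj s t v v := subAdj_irrefl hi
    have hp2 : Proper (SubAdj adj s t) := proper_sub hs hi hp hst
    have hsub : {e : V × V | SubAdj adj s t e.1 e.2} ⊂ {e : V × V | adj e.1 e.2} := by
      constructor
      · rintro e ⟨h1, _⟩
        exact h1
      · intro hcon
        have := hcon (show ((s, t) : V × V) ∈ {e : V × V | adj e.1 e.2} from hst)
        exact this.2 (Or.inl GEq.refl)
    have hcard2 : {e : V × V | SubAdj adj s t e.1 e.2}.ncard ≤ n := by
      have := Set.ncard_lt_ncard hsub (Set.toFinite _)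
      omega
    obtain ⟨F2, hF2e, hF2o, hF2t⟩ := IH (SubAdj adj s t) hcard2 hs2 hi2 hp2
    have hF2adj : ∀ e ∈ F2, adj e.1 e.2 := fun e he => (hF2e e he).1
    have hF2nh : ∀ e ∈ F2, ¬ InHat adj s t e := fun e he => (hF2e e he).2
    set A : Set (V × V) := {e | GEq adj e (s, t)} with hA
    have hAedge : ∀ e ∈ A, adj e.1 e.2 := fun e he =>
      GEq.edge ((he : GEq adj e (s, t)).symm hs) hst
    have hAanti : ∀ u v, (u, v) ∈ A → (v, u) ∈ A → False := fun u v h1 h2 =>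
      hp u v (hAedge _ h1) (h1.trans ((h2 : GEq adj _ _).symm hs))
    have hAtrans : ∀ u v w, (u, v) ∈ A → (v, w) ∈ A → (u, w) ∈ A := by
      intro u v w h1 h2
      have h12 : GEq adj (u, v) (v, w) := h1.trans ((h2 : GEq adj _ _).symm hs)
      have := class_trans hs hi hp (hAedge _ h1) (hAedge _ h2) h12
      exact (GEq.trans (this.2.symm hs) h1 : GEq adj (u, w) (s, t))
    have hAinv : ∀ u v, GEq adj (u, v) (t, s) → (v, u) ∈ A := by
      intro u v h
      have := h.inve hs
      exact this
    refine ⟨F2 ∪ A, ?_, ?_, ?_⟩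
    · rintro e (he | he)
      · exact hF2adj e he
      · exact hAedge e he
    · intro u v huv
      by_cases hh : InHat adj s t (u, v)
      · have hnf1 : (u, v) ∉ F2 := fun hc => hF2nh _ hc hh
        have hnf2 : (v, u) ∉ F2 := fun hc => hF2nh _ hc (hh.flip hs)
        rcases hh with h | h
        · constructor
          · rintro _ (hc | hc)
            · exact hnf2 hc
            · exact hAanti u v h hc
          · intro _
            exact Or.inr h
        · have hvu : (v, u) ∈ A := hAinv u v h
          constructor
          · rintro (hc | hc) _
            · exact hnf1 hc
            · exact hAanti u v hc hvu
          · intro hc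
            exact absurd (Or.inr hvu) hc
      · have huv2 : SubAdj adj s t u v := ⟨huv, hh⟩
        have h1 := hF2o u v huv2
        constructor
        · rintro (hc | hc) (hc2 | hc2)
          · exact (h1.mp hc) hc2
          · exact hh ((InHat.flip hs) (Or.inl hc2))
          · exact hh (Or.inl hc)
          · exact hh (Or.inl hc)
        · intro hc
          exact Or.inl (h1.mpr (fun hhh => hc (Or.inl hhh)))
    · rintro u v w (h1 | h1) (h2 | h2)
      · exact Or.inl (hF2t u v w h1 h2)
      · -- (u,v) ∈ F2, (v,w) ∈ A
        have hadj_uw : adj u w := by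
          by_contra hc
          have hstep : GStep adj (u, v) (w, v) :=
            ⟨hF2adj _ h1, hs (hAedge _ h2), Or.inr ⟨rfl, hc⟩⟩
          have hinv : GEq adj (w, v) (t, s) := by
            have := (h2 : GEq adj (v, w) (s, t)).inve hs
            simpa [inve] using this
          exact hF2nh _ h1 (Or.inr ((Relation.ReflTransGen.single hstep).trans hinv))
        by_cases hhat : InHat adj s t (u, w)
        · rcases hhat with h | h
          · exact Or.inr h
          · have hwu : (w, u) ∈ A := hAinv u w h
            have := hAtrans v w u h2 hwu
            exact absurd (InHat.flip hs (Or.inl this)) (hF2nh _ h1)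
        · have h2' : SubAdj adj s t u w := ⟨hadj_uw, hhat⟩
          have horz := hF2o u w h2'
          by_cases hwu : (w, u) ∈ F2
          · have := hF2t w u v hwu h1
            exact absurd (InHat.flip hs (Or.inl h2)) (hF2nh _ this)
          · exact Or.inl (horz.mpr hwu)
      · -- (u,v) ∈ A, (v,w) ∈ F2
        have hadj_uw : adj u w := by
          by_contra hc
          have hstep : GStep adj (v, w) (v, u) :=
            ⟨hF2adj _ h2, hs (hAedge _ h1), Or.inl ⟨rfl, fun hh => hc (hs hh)⟩⟩
          have hinv : GEq adj (v, u) (t, s) := by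
            have := (h1 : GEq adj (u, v) (s, t)).inve hs
            simpa [inve] using this
          exact hF2nh _ h2 (Or.inr ((Relation.ReflTransGen.single hstep).trans hinv))
        by_cases hhat : InHat adj s t (u, w)
        · rcases hhat with h | h
          · exact Or.inr h
          · have hwu : (w, u) ∈ A := hAinv u w h
            have := hAtrans w u v hwu h1
            exact absurd (InHat.flip hs (Or.inl this)) (hF2nh _ h2)
        · have h2' : SubAdj adj s t u w := ⟨hadj_uw, hhat⟩
          have horz := hF2o u w h2'
          by_cases hwu : (w, u) ∈ F2
          · have := hF2t v w u h2 hwu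
            exact absurd (InHat.flip hs (Or.inl h1)) (hF2nh _ this)
          · exact Or.inl (horz.mpr hwu)
      · exact Or.inr (hAtrans u v w h1 h2)

theorem exists_tro [Fintype V] (adj : V → V → Prop) (hs : Symmetric adj)
    (hi : ∀ v, ¬ adj v v) (hp : Proper adj) : ∃ F, IsTRO adj F :=
  exists_tro_aux _ adj le_rfl hs hi hp

end Main


section Poset

variable {X : Type*} [PartialOrder X]

/-- The incomparability adjacency. -/
def padj : X → X → Prop := fun x y => ¬ x ≤ y ∧ ¬ y ≤ x

lemma padj_symm : Symmetric (padj (X := X)) := fun _ _ h => ⟨h.2, h.1⟩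

lemma padj_irrefl : ∀ x : X, ¬ padj x x := fun _ h => h.1 le_rfl

lemma proper_of_partition (P1 P2 : Set (X × X))
    (hU : P1 ∪ P2 = IncPairs X)
    (h1 : ∀ p ∈ P1, ∀ q ∈ P1, ¬ Incomp p q) (h2 : ∀ p ∈ P2, ∀ q ∈ P2, ¬ Incomp p q) :
    Proper (padj (X := X)) := by
  have hmem : ∀ e : X × X, padj e.1 e.2 → e ∈ P1 ∨ e ∈ P2 := by
    intro e he
    have : e ∈ P1 ∪ P2 := by rw [hU]; exact ⟨he.1, he.2⟩
    exact this
  have hopp : ∀ p q : X × X, padj p.1 p.2 → padj q.1 q.2 → Incomp p q →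
      (p ∈ P1 ↔ q ∉ P1) := by
    intro p q hp hq hinc
    constructor
    · intro hp1 hq1
      exact h1 p hp1 q hq1 hinc
    · intro hq1
      rcases hmem p hp with h | h
      · exact h
      · rcases hmem q hq with h' | h'
        · exact absurd h' hq1
        · exact absurd hinc (h2 p h q h')
  have hside : ∀ e f : X × X, GStep (padj (X := X)) e f → (e ∈ P1 ↔ f ∈ P1) := by
    rintro e f ⟨he, hf, hd⟩
    rcases hd with ⟨hfst, hnadj⟩ | ⟨hsnd, hnadj⟩
    · have hcmp : e.2 ≤ f.2 ∨ f.2 ≤ e.2 := by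
        by_contra hc
        push_neg at hc
        exact hnadj ⟨hc.1, hc.2⟩
      rcases hcmp with hle | hge
      · have hmadj : padj (f.2, e.1).1 (f.2, e.1).2 := by
          have := padj_symm hf
          rwa [← hfst] at this
        have i1 : Incomp e (f.2, e.1) := ⟨le_rfl, hle⟩
        have i2 : Incomp f (f.2, e.1) := ⟨hfst ▸ le_rfl, le_rfl⟩
        exact (hopp e _ he hmadj i1).trans (hopp f _ hf hmadj i2).symm
      · have hmadj : padj (e.2, e.1).1 (e.2, e.1).2 := padj_symm he
        have i1 : Incomp e (e.2, e.1) := ⟨le_rfl, le_rfl⟩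
        have i2 : Incomp f (e.2, e.1) := ⟨hfst ▸ le_rfl, hge⟩
        exact (hopp e _ he hmadj i1).trans (hopp f _ hf hmadj i2).symm
    · have hcmp : e.1 ≤ f.1 ∨ f.1 ≤ e.1 := by
        by_contra hc
        push_neg at hc
        exact hnadj ⟨hc.1, hc.2⟩
      rcases hcmp with hle | hge
      · have hmadj : padj (e.2, e.1).1 (e.2, e.1).2 := padj_symm he
        have i1 : Incomp e (e.2, e.1) := ⟨le_rfl, le_rfl⟩
        have i2 : Incomp f (e.2, e.1) := ⟨hle, hsnd ▸ le_rfl⟩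
        exact (hopp e _ he hmadj i1).trans (hopp f _ hf hmadj i2).symm
      · have hmadj : padj (f.2, f.1).1 (f.2, f.1).2 := padj_symm hf
        have i1 : Incomp e (f.2, f.1) := ⟨hge, hsnd ▸ le_rfl⟩
        have i2 : Incomp f (f.2, f.1) := ⟨le_rfl, le_rfl⟩
        exact (hopp e _ he hmadj i1).trans (hopp f _ hf hmadj i2).symm
  have hgeq : ∀ e f : X × X, GEq (padj (X := X)) e f → (e ∈ P1 ↔ f ∈ P1) := by
    intro e f h
    induction h with
    | refl => exact Iff.rfl
    | tail _ hstep ih => exact ih.trans (hside _ _ hstep)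
  intro u v huv hG
  have hsame := hgeq _ _ hG
  have hvu : padj v u := padj_symm huv
  have hoppuv := hopp (u, v) (v, u) huv hvu ⟨le_rfl, le_rfl⟩
  by_cases hc : (u, v) ∈ P1
  · exact (hoppuv.mp hc) (hsame.mp hc)
  · exact hc (hoppuv.mpr (fun hvu => hc (hsame.mpr hvu)))

/-- A transitive orientation of the incomparability graph extends ≤ to a linear order. -/
lemma isLinearOrder_of_tro (F : Set (X × X)) (hF : IsTRO (padj (X := X)) F) :
    IsLinearOrder X (fun x y => x ≤ y ∨ (x, y) ∈ F) := by
  obtain ⟨hFe, hFo, hFt⟩ := hF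
  refine { refl := fun x => Or.inl le_rfl,
           trans := ?_, antisymm := ?_, total := ?_ }
  · rintro a b c (h1 | h1) (h2 | h2)
    · exact Or.inl (h1.trans h2)
    · by_cases hac : a ≤ c
      · exact Or.inl hac
      · have hbc := hFe _ h2
        have hca : ¬ c ≤ a := fun hca => hbc.2 (hca.trans h1)
        by_cases hF1 : (c, a) ∈ F
        · have := hFt b c a h2 hF1
          exact absurd h1 (hFe _ this).2
        · exact Or.inr ((hFo a c ⟨hac, hca⟩).mpr hF1)
    · by_cases hac : a ≤ c
      · exact Or.inl hac
      · have hab := hFe _ h1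
        have hca : ¬ c ≤ a := fun hca => hab.2 (h2.trans hca)
        by_cases hF1 : (c, a) ∈ F
        · have := hFt c a b hF1 h1
          exact absurd h2 (hFe _ this).2
        · exact Or.inr ((hFo a c ⟨hac, hca⟩).mpr hF1)
    · exact Or.inr (hFt a b c h1 h2)
  · rintro a b (h1 | h1) (h2 | h2)
    · exact le_antisymm h1 h2
    · exact absurd h1 (hFe _ h2).2
    · exact absurd h2 (hFe _ h1).2
    · exact absurd h2 ((hFo a b (hFe _ h1)).mp h1).elim
  · intro a b
    by_cases hab : a ≤ b
    · exact Or.inl (Or.inl hab)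
    by_cases hba : b ≤ a
    · exact Or.inr (Or.inl hba)
    by_cases hf : (a, b) ∈ F
    · exact Or.inl (Or.inr hf)
    · have := (hFo a b ⟨hab, hba⟩)
      have hf2 : (b, a) ∈ F := by
        by_contra hc
        exact hf (this.mpr hc)
      exact Or.inr (Or.inr hf2)

lemma inv_tro (F : Set (X × X)) (hF : IsTRO (padj (X := X)) F) :
    IsTRO (padj (X := X)) {e : X × X | (e.2, e.1) ∈ F} := by
  obtain ⟨hFe, hFo, hFt⟩ := hF
  refine ⟨?_, ?_, ?_⟩
  · intro e he
    exact padj_symm (hFe _ he)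
  · intro u v huv
    exact hFo v u (padj_symm huv)
  · intro u v w h1 h2
    exact hFt w v u h2 h1

end Poset

end DDFGH


open DDFGH in
/-- Doignon–Ducamp–Falmagne: a finite poset has order dimension at
most 2 (it is the intersection of two linear extensions) iff tig(X,≤) is bipartite. -/
theorem stmt_13 {X : Type*} [Fintype X] [PartialOrder X] :
    (∃ L1 L2 : X → X → Prop,
        IsLinearOrder X L1 ∧ IsLinearOrder X L2 ∧
        (∀ x y : X, x ≤ y → L1 x y) ∧ (∀ x y : X, x ≤ y → L2 x y) ∧
        ∀ x y : X, x ≤ y ↔ (L1 x y ∧ L2 x y)) ↔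
    (∃ P1 P2 : Set (X × X), P1 ∪ P2 = IncPairs X ∧ Disjoint P1 P2 ∧
        (∀ p ∈ P1, ∀ q ∈ P1, ¬ Incomp p q) ∧ (∀ p ∈ P2, ∀ q ∈ P2, ¬ Incomp p q)) := by
  constructor
  · rintro ⟨L1, L2, hL1, hL2, he1, he2, hiff⟩
    -- a linear extension yields an incompatibility-free class
    have key : ∀ (L : X → X → Prop), IsLinearOrder X L → (∀ x y : X, x ≤ y → L x y) →
        ∀ p ∈ {p ∈ IncPairs X | L p.1 p.2}, ∀ q ∈ {p ∈ IncPairs X | L p.1 p.2},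
          ¬ Incomp p q := by
      rintro L hL he p ⟨hpI, hpL⟩ q ⟨hqI, hqL⟩ ⟨hq2p1, hp2q1⟩
      have l1 : L q.2 p.1 := he _ _ hq2p1
      have l2 : L p.2 q.1 := he _ _ hp2q1
      have l3 : L p.1 q.2 := hL.trans _ _ _ (hL.trans _ _ _ hpL l2) hqL
      have e1 : p.1 = q.2 := hL.antisymm _ _ l3 l1
      have l4 : L p.2 p.1 := by
        have := hL.trans _ _ _ l2 hqL
        rwa [← e1] at this
      have e2 : p.1 = p.2 := hL.antisymm _ _ hpL l4
      exact hpI.1 (e2 ▸ le_rfl)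
    refine ⟨{p ∈ IncPairs X | L1 p.1 p.2}, {p ∈ IncPairs X | L2 p.1 p.2}, ?_, ?_,
      key L1 hL1 he1, key L2 hL2 he2⟩
    · ext p
      constructor
      · rintro (⟨h, _⟩ | ⟨h, _⟩) <;> exact h
      · intro hp
        rcases hL1.total p.1 p.2 with h | h
        · exact Or.inl ⟨hp, h⟩
        rcases hL2.total p.1 p.2 with h' | h'
        · exact Or.inr ⟨hp, h'⟩
        · exact absurd ((hiff p.2 p.1).mpr ⟨h, h'⟩) hp.2
    · rw [Set.disjoint_left]
      rintro p ⟨hpI, hp1⟩ ⟨_, hp2⟩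
      exact hpI.1 ((hiff p.1 p.2).mpr ⟨hp1, hp2⟩)
  · rintro ⟨P1, P2, hU, hD, h1, h2⟩
    have hp : Proper (padj (X := X)) := proper_of_partition P1 P2 hU h1 h2
    obtain ⟨F, hF⟩ := exists_tro (padj (X := X)) padj_symm padj_irrefl hp
    refine ⟨fun x y => x ≤ y ∨ (x, y) ∈ F, fun x y => x ≤ y ∨ (y, x) ∈ F,
      isLinearOrder_of_tro F hF, isLinearOrder_of_tro _ (inv_tro F hF),
      fun x y h => Or.inl h, fun x y h => Or.inl h, ?_⟩
    intro x y
    constructor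
    · exact fun h => ⟨Or.inl h, Or.inl h⟩
    · rintro ⟨h1' | h1', h2' | h2'⟩
      · exact h1'
      · exact h1'
      · exact absurd h2' (hF.1 _ h1').1.elim
      · exact absurd h2' ((hF.2.1 x y (hF.1 _ h1')).mp h1')
end

section
/- For a finite poset (X,≤), if (X,≤) has order dimension at least 3 then the transitive incompatibility graph tig(X,≤) contains an odd cycle. -/
/-!
If tig(X,≤) has no odd cycle, then no implication class of the incomparability graph (a class of
Golumbic's forcing relation `Γ`) contains a pair together with its reverse: a `Γ`-step is a path of
length two in tig, and every incomparable pair is adjacent in tig to its reverse. Gallai's theorem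
then gives a transitive orientation `S` of the incomparability graph, by induction on the number of
incomparable pairs: adding one implication class to the order yields a partial order whose
implication classes are unions of old ones glued at apexes of triangles, so they still avoid their
reverses. Linear extensions of `≤ ∪ S` and of `≤ ∪ S⁻¹` intersect in `≤`. Finally, a shortest odd
closed walk is a cycle.
-/

section OddCycle

variable {α : Type*} {R : α → α → Prop}

theorem exists_injective_cycle_of_injOn {n : ℕ} [NeZero n] {f : ℕ → α} (hclosed : f n = f 0)
    (hR : ∀ k < n, R (f k) (f (k + 1))) (hinj : Set.InjOn f (Set.Iio n)) :
    ∃ c : ZMod n → α, Function.Injective c ∧ ∀ i, R (c i) (c (i + 1)) := by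
  refine ⟨fun i => f i.val, fun i j hij => ZMod.val_injective n
    (hinj (ZMod.val_lt i) (ZMod.val_lt j) hij), fun i => ?_⟩
  have hi := ZMod.val_lt i
  have hsucc : (i + 1).val = (i.val + 1) % n := by
    rw [← ZMod.val_natCast, Nat.cast_succ, ZMod.natCast_zmod_val]
  show R (f i.val) (f (i + 1).val)
  rw [hsucc]
  rcases (show i.val + 1 ≤ n from hi).lt_or_eq with hlt | heq
  · rw [Nat.mod_eq_of_lt hlt]
    exact hR _ hi
  · rw [heq, Nat.mod_self, ← hclosed]
    simpa [heq] using hR _ hi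

theorem exists_injective_odd_cycle_of_closed_walk {n : ℕ} (hn : Odd n) {f : ℕ → α}
    (hclosed : f n = f 0) (hR : ∀ k < n, R (f k) (f (k + 1))) :
    ∃ m, Odd m ∧ ∃ c : ZMod m → α, Function.Injective c ∧ ∀ i, R (c i) (c (i + 1)) := by
  induction n using Nat.strong_induction_on generalizing f with
  | _ n ih =>
  by_cases hinj : Set.InjOn f (Set.Iio n)
  · have : NeZero n := ⟨hn.pos.ne'⟩
    exact ⟨n, hn, exists_injective_cycle_of_injOn hclosed hR hinj⟩
  obtain ⟨i, j, hij, hj, hfij⟩ : ∃ i j, i < j ∧ j < n ∧ f i = f j := by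
    simp only [Set.InjOn, Set.mem_Iio, not_forall] at hinj
    obtain ⟨i, hi, j, hj, hfij, hne⟩ := hinj
    rcases Nat.lt_or_gt_of_ne hne with h | h
    exacts [⟨i, j, h, hj, hfij⟩, ⟨j, i, h, hi, hfij.symm⟩]
  -- cutting out the closed walk between the two visits leaves a closed walk of length
  -- `n - (j - i)`, and one of the two is odd
  rcases Nat.even_or_odd (j - i) with hd | hd
  · refine ih (n - (j - i)) (by omega) (Nat.Odd.sub_even (by omega) hn hd)
      (f := fun k => if k ≤ i then f k else f (k + (j - i)))
      (by simp [show ¬ n - (j - i) ≤ i by omega, show n - (j - i) + (j - i) = n by omega,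
        hclosed]) fun k hk => ?_
    rcases lt_trichotomy k i with hki | rfl | hki
    · simpa [hki.le, Nat.succ_le_of_lt hki] using hR k (by omega)
    · simpa [hfij, show k + 1 + (j - k) = j + 1 by omega] using hR j hj
    · simpa [show ¬ k ≤ i by omega, show ¬ k + 1 ≤ i by omega,
        show k + 1 + (j - i) = k + (j - i) + 1 by omega] using hR (k + (j - i)) (by omega)
  · exact ih (j - i) (by omega) hd (f := fun k => f (i + k))
      (by simp [show i + (j - i) = j by omega, hfij])
      fun k hk => by simpa [add_assoc] using hR (i + k) (by omega)

theorem SimpleGraph.Walk.exists_injective_odd_cycle {G : SimpleGraph α} {u : α}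
    (w : G.Walk u u) (hw : Odd w.length) :
    ∃ n, Odd n ∧ ∃ c : ZMod n → α, Function.Injective c ∧ ∀ i, G.Adj (c i) (c (i + 1)) :=
  exists_injective_odd_cycle_of_closed_walk hw (f := w.getVert)
    (by rw [getVert_length, getVert_zero])
    fun _ hk => w.adj_getVert_succ hk

end OddCycle

namespace Gallai

variable {X : Type*} {r : X → X → Prop}

def Incomparable (r : X → X → Prop) (p : X × X) : Prop := ¬ r p.1 p.2 ∧ ¬ r p.2 p.1

/-- Golumbic's forcing relation `Γ` on the oriented edges of the incomparability graph of `r`;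
the classes of its reflexive-transitive closure `SameClass` are the implication classes. -/
def Forcing (r : X → X → Prop) (p q : X × X) : Prop :=
  Incomparable r p ∧ Incomparable r q ∧
    (p.1 = q.1 ∧ (r p.2 q.2 ∨ r q.2 p.2) ∨ p.2 = q.2 ∧ (r p.1 q.1 ∨ r q.1 p.1))

def SameClass (r : X → X → Prop) : X × X → X × X → Prop := Relation.ReflTransGen (Forcing r)

/-- Golumbic's condition `A ∩ A⁻¹ = ∅` for every implication class `A`. -/
def ClassAsymm (r : X → X → Prop) : Prop := ∀ p, Incomparable r p → ¬ SameClass r p p.swap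

theorem Incomparable.swap {p : X × X} (h : Incomparable r p) : Incomparable r p.swap :=
  ⟨h.2, h.1⟩

theorem not_incomparable_iff {p : X × X} : ¬ Incomparable r p ↔ r p.1 p.2 ∨ r p.2 p.1 := by
  rw [Incomparable, ← not_or, not_not]

theorem Forcing.of_fst {a b b' : X} (h : Incomparable r (a, b)) (h' : Incomparable r (a, b'))
    (hb : r b b' ∨ r b' b) : Forcing r (a, b) (a, b') :=
  ⟨h, h', Or.inl ⟨rfl, hb⟩⟩

theorem Forcing.of_snd {a a' b : X} (h : Incomparable r (a, b)) (h' : Incomparable r (a', b))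
    (ha : r a a' ∨ r a' a) : Forcing r (a, b) (a', b) :=
  ⟨h, h', Or.inr ⟨rfl, ha⟩⟩

theorem Forcing.symm {p q : X × X} (h : Forcing r p q) : Forcing r q p :=
  ⟨h.2.1, h.1, h.2.2.imp (And.imp Eq.symm Or.symm) (And.imp Eq.symm Or.symm)⟩

theorem Forcing.swap {p q : X × X} (h : Forcing r p q) : Forcing r p.swap q.swap :=
  ⟨h.1.swap, h.2.1.swap, h.2.2.symm⟩

instance : Std.Symm (Forcing r) := ⟨fun _ _ => Forcing.symm⟩

namespace SameClass

theorem symm {p q : X × X} (h : SameClass r p q) : SameClass r q p :=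
  Std.Symm.symm (r := Relation.ReflTransGen (Forcing r)) _ _ h

theorem swap {p q : X × X} (h : SameClass r p q) : SameClass r p.swap q.swap :=
  Relation.ReflTransGen.lift Prod.swap (fun _ _ => Forcing.swap) _ _ h

theorem incomparable {p q : X × X} (h : SameClass r p q) (hp : Incomparable r p) :
    Incomparable r q := by
  induction h with
  | refl => exact hp
  | tail _ hstep _ => exact hstep.2.1

theorem incomparable_of_right {p q : X × X} (h : SameClass r p q) (hq : Incomparable r q) :
    Incomparable r p :=
  h.symm.incomparable hq

end SameClass

/-- Golumbic's triangle lemma: the apex `a` of a triangle `a, b, c` of the incomparability graph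
follows every pair of the implication class of the base `(b, c)`. -/
theorem sameClass_apex {a b c : X} (hab : Incomparable r (a, b)) (hac : Incomparable r (a, c))
    (hba : ¬ SameClass r (b, c) (b, a)) (hca : ¬ SameClass r (b, c) (a, c)) {e : X × X}
    (he : SameClass r (b, c) e) : SameClass r (a, e.1) (a, b) ∧ SameClass r (a, e.2) (a, c) := by
  induction he with
  | refl => exact ⟨.refl, .refl⟩
  | @tail m e hm hstep ih =>
    have hbe : SameClass r (b, c) e := hm.tail hstep
    have hm₁ := ih.1.incomparable_of_right hab
    have hm₂ := ih.2.incomparable_of_right hac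
    obtain ⟨-, he, ⟨h₁, hcmp⟩ | ⟨h₂, hcmp⟩⟩ := hstep
    · rw [← h₁]
      refine ⟨ih.1, ?_⟩
      by_cases ha : Incomparable r (a, e.2)
      · exact .head (Forcing.of_fst hm₂ ha hcmp).symm ih.2
      have hea : Forcing r e (e.1, a) :=
        ⟨he, h₁ ▸ hm₁.swap, Or.inl ⟨rfl, (not_incomparable_iff.mp ha).symm⟩⟩
      have hcb : SameClass r (c, b) (a, e.1) := SameClass.swap (hbe.tail hea)
      have hcb' : SameClass r (c, b) (a, b) := hcb.trans (h₁ ▸ ih.1)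
      exact (hba (SameClass.swap hcb')).elim
    · rw [← h₂]
      refine ⟨?_, ih.2⟩
      by_cases ha : Incomparable r (a, e.1)
      · exact .head (Forcing.of_fst hm₁ ha hcmp).symm ih.1
      have hae : Forcing r e (a, e.2) :=
        ⟨he, h₂ ▸ hm₂, Or.inr ⟨rfl, (not_incomparable_iff.mp ha).symm⟩⟩
      exact (hca ((hbe.tail hae).trans (h₂ ▸ ih.2))).elim

/-- An implication class disjoint from its reverse is transitive. -/
theorem ClassAsymm.sameClass_of_chain [Std.Refl r] (hA : ClassAsymm r) {a b c : X}
    (hab : Incomparable r (a, b)) (h : SameClass r (a, b) (b, c)) :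
    SameClass r (a, b) (a, c) := by
  have hbc := h.incomparable hab
  have hac : Incomparable r (a, c) := by
    by_contra hac
    exact hA _ hbc (h.symm.tail (Forcing.of_snd hab hbc.swap (not_incomparable_iff.mp hac)))
  by_contra hne
  have hba : ¬ SameClass r (b, c) (b, a) := fun h' => hA _ hab (h.trans h')
  exact ((sameClass_apex hab hac hba (fun h' => hne (h.trans h')) h.symm).1.incomparable_of_right
    hab).1 (refl_of r a)

def addClass (r : X → X → Prop) (p₀ : X × X) (x y : X) : Prop := r x y ∨ SameClass r (x, y) p₀

theorem incomparable_addClass_iff {p₀ e : X × X} :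
    Incomparable (addClass r p₀) e ↔
      Incomparable r e ∧ ¬ SameClass r e p₀ ∧ ¬ SameClass r e.swap p₀ := by
  simp only [Incomparable, addClass, not_or]
  tauto

theorem isPartialOrder_addClass [IsPartialOrder X r] (hA : ClassAsymm r) {p₀ : X × X}
    (hp₀ : Incomparable r p₀) : IsPartialOrder X (addClass r p₀) where
  refl x := Or.inl (refl_of r x)
  trans x y z := by
    have hinc {e : X × X} (he : SameClass r e p₀) := he.incomparable_of_right hp₀
    rintro (hxy | hxy) (hyz | hyz)
    · exact Or.inl (trans_of r hxy hyz)
    · by_contra! h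
      rw [addClass, not_or] at h
      have hxz : Incomparable r (x, z) := ⟨h.1, fun hzx => (hinc hyz).2 (trans_of r hzx hxy)⟩
      exact h.2 (.head (Forcing.of_snd hxz (hinc hyz) (Or.inl hxy)) hyz)
    · by_contra! h
      rw [addClass, not_or] at h
      have hxz : Incomparable r (x, z) := ⟨h.1, fun hzx => (hinc hxy).2 (trans_of r hyz hzx)⟩
      exact h.2 (.head (Forcing.of_fst hxz (hinc hxy) (Or.inr hyz)) hxy)
    · exact Or.inr ((hA.sameClass_of_chain (hinc hxy) (hxy.trans hyz.symm)).symm.trans hxy)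
  antisymm x y := by
    have hinc {e : X × X} (he : SameClass r e p₀) := he.incomparable_of_right hp₀
    rintro (hxy | hxy) (hyx | hyx)
    · exact antisymm_of r hxy hyx
    · exact ((hinc hyx).2 hxy).elim
    · exact ((hinc hxy).2 hyx).elim
    · exact (hA _ (hinc hxy) (hxy.trans hyx.symm)).elim

section Apex

variable {s t : X}

/-- A third vertex of a triangle on the edge `(s, t)` of the incomparability graph, such that the
triangle lemma `sameClass_apex` applies with apex `t` to the base `(x, s)` and with apex `s` to
the base `(x, t)`. -/
structure IsApex (r : X → X → Prop) (s t x : X) : Prop where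
  incomparable_s : Incomparable r (x, s)
  incomparable_t : Incomparable r (x, t)
  sides : ¬ SameClass r (x, s) (x, t)
  ne_base_s : ¬ SameClass r (x, s) (t, s)
  ne_base_t : ¬ SameClass r (x, t) (s, t)

def ApexClass (r : X → X → Prop) (s t x : X) (e : X × X) : Prop :=
  SameClass r e (x, s) ∨ SameClass r e (x, t)

/-- Once the class of `(s, t)` is added to `r`, a forcing step of the new order is an old one or
joins the two sides of an apex (`linked_of_sameClass_snd`): the new implication classes are
unions of old ones glued at apexes. -/
def Linked (r : X → X → Prop) (s t : X) (e f : X × X) : Prop :=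
  SameClass r e f ∨ ∃ x, IsApex r s t x ∧ ApexClass r s t x e ∧ ApexClass r s t x f

def LinkedUpToSwap (r : X → X → Prop) (s t : X) (e f : X × X) : Prop :=
  Linked r s t e f ∨ Linked r s t e.swap f.swap

theorem IsApex.comm {x : X} (hx : IsApex r s t x) : IsApex r t s x :=
  ⟨hx.incomparable_t, hx.incomparable_s, fun h => hx.sides h.symm, hx.ne_base_t, hx.ne_base_s⟩

theorem ApexClass.comm {x : X} {e : X × X} (h : ApexClass r s t x e) : ApexClass r t s x e :=
  h.symm

theorem ApexClass.of_sameClass {x : X} {e f : X × X} (hef : SameClass r e f)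
    (h : ApexClass r s t x f) : ApexClass r s t x e :=
  h.imp hef.trans hef.trans

theorem Linked.symm {e f : X × X} (h : Linked r s t e f) : Linked r s t f e :=
  h.imp SameClass.symm fun ⟨x, hx, he, hf⟩ => ⟨x, hx, hf, he⟩

theorem linked_of_sameClass_snd {x y y' : X} (h : Incomparable (addClass r (s, t)) (x, y))
    (h' : Incomparable (addClass r (s, t)) (x, y')) (hyy : SameClass r (y, y') (s, t)) :
    Linked r s t (x, y) (x, y') := by
  rw [incomparable_addClass_iff] at h h'
  obtain ⟨hxs, hxt⟩ := sameClass_apex (a := x) h.1 h'.1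
    (fun h'' => h.2.2 (h''.symm.trans hyy)) (fun h'' => h'.2.1 (h''.symm.trans hyy)) hyy
  by_cases hc : SameClass r (x, s) (x, t)
  · exact Or.inl (hxs.symm.trans (hc.trans hxt))
  refine Or.inr ⟨x, ⟨hxs.incomparable_of_right h.1, hxt.incomparable_of_right h'.1, hc,
    fun h'' => h.2.2 ?_, fun h'' => h'.2.1 (hxt.symm.trans h'')⟩, Or.inl hxs.symm, Or.inr hxt.symm⟩
  exact SameClass.swap (hxs.symm.trans h'')

theorem linked_of_forcing_fst {m e : X × X} (hm : Incomparable (addClass r (s, t)) m)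
    (he : Incomparable (addClass r (s, t)) e) (h₁ : m.1 = e.1)
    (hcmp : addClass r (s, t) m.2 e.2 ∨ addClass r (s, t) e.2 m.2) : Linked r s t m e := by
  obtain ⟨x, y⟩ := m
  obtain ⟨x', y'⟩ := e
  obtain rfl : x = x' := h₁
  have hm' := (incomparable_addClass_iff.mp hm).1
  have he' := (incomparable_addClass_iff.mp he).1
  rcases hcmp with (h | h) | (h | h)
  · exact Or.inl (.single (Forcing.of_fst hm' he' (Or.inl h)))
  · exact linked_of_sameClass_snd hm he h
  · exact Or.inl (.single (Forcing.of_fst hm' he' (Or.inr h)))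
  · exact (linked_of_sameClass_snd he hm h).symm

theorem linkedUpToSwap_of_forcing {m e : X × X} (h : Forcing (addClass r (s, t)) m e) :
    LinkedUpToSwap r s t m e := by
  obtain ⟨hm, he, ⟨h₁, hcmp⟩ | ⟨h₂, hcmp⟩⟩ := h
  · exact Or.inl (linked_of_forcing_fst hm he h₁ hcmp)
  · exact Or.inr (linked_of_forcing_fst hm.swap he.swap h₂ hcmp)

variable (hst : Incomparable r (s, t))
include hst

theorem IsApex.sameClass_of_sameClass {x : X} (hx : IsApex r s t x) {e : X × X}
    (h : SameClass r (x, s) e) : SameClass r (t, e.1) (t, x) ∧ SameClass r (t, e.2) (t, s) :=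
  sameClass_apex hx.incomparable_t.swap hst.swap hx.sides hx.ne_base_s h

theorem IsApex.apexClass_of_apexClass [Std.Refl r] {x u : X} (hx : IsApex r s t x)
    (h : ApexClass r s t u (x, s)) {f : X × X} (hf : ApexClass r s t u f) :
    ApexClass r s t x f := by
  rcases h with h | h
  · have hts : SameClass r (u, t) (x, t) := SameClass.swap (hx.sameClass_of_sameClass hst h).1
    exact hf.imp (fun hf => hf.trans h.symm) (fun hf => hf.trans hts)
  · exact (((hx.sameClass_of_sameClass hst h).2.incomparable_of_right hst.swap).1
      (refl_of r t)).elim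

theorem IsApex.not_apexClass_swap [Std.Refl r] {x u : X} (hx : IsApex r s t x) :
    ¬ ApexClass r s t u (s, x) := by
  rintro (h | h)
  · exact hx.ne_base_t (SameClass.swap (hx.sameClass_of_sameClass hst (SameClass.swap h)).1.symm)
  · exact (((hx.sameClass_of_sameClass hst (SameClass.swap h)).1.incomparable_of_right
      hx.incomparable_t.swap).1 (refl_of r t)).elim

theorem IsApex.apexClass_of_common [Std.Refl r] {x u : X} (hx : IsApex r s t x) {e f : X × X}
    (he : ApexClass r s t x e) (he' : ApexClass r s t u e) (hf : ApexClass r s t u f) :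
    ApexClass r s t x f := by
  rcases he with he | he
  · exact hx.apexClass_of_apexClass hst (he'.of_sameClass he.symm) hf
  · exact (hx.comm.apexClass_of_apexClass hst.swap (he'.comm.of_sameClass he.symm) hf.comm).comm

theorem IsApex.not_apexClass_of_swap [Std.Refl r] {x u : X} (hx : IsApex r s t x) {e : X × X}
    (he : ApexClass r s t x e) (he' : ApexClass r s t u e.swap) : False := by
  rcases he with he | he
  · exact hx.not_apexClass_swap hst (he'.of_sameClass (SameClass.swap he.symm))
  · exact hx.comm.not_apexClass_swap hst.swap (he'.comm.of_sameClass (SameClass.swap he.symm))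

theorem Linked.trans [Std.Refl r] {e f g : X × X} (h₁ : Linked r s t e f)
    (h₂ : Linked r s t f g) : Linked r s t e g := by
  rcases h₁ with h₁ | ⟨u, hu, he, hf⟩ <;> rcases h₂ with h₂ | ⟨x, hx, hf', hg⟩
  · exact Or.inl (h₁.trans h₂)
  · exact Or.inr ⟨x, hx, hf'.of_sameClass h₁, hg⟩
  · exact Or.inr ⟨u, hu, he, hf.of_sameClass h₂.symm⟩
  · exact Or.inr ⟨x, hx, hx.apexClass_of_common hst hf' hf he, hg⟩

theorem Linked.swap_trans [Std.Refl r] {e f g : X × X} (h₁ : Linked r s t e f)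
    (h₂ : Linked r s t f.swap g.swap) : Linked r s t e g ∨ Linked r s t e.swap g.swap := by
  rcases h₁ with h₁ | ⟨u, hu, he, hf⟩
  · exact Or.inr (Linked.trans hst (Or.inl (SameClass.swap h₁)) h₂)
  rcases h₂ with h₂ | ⟨x, hx, hf', -⟩
  · have h₂' : SameClass r f g := by simpa using SameClass.swap h₂
    exact Or.inl (Linked.trans hst (Or.inr ⟨u, hu, he, hf⟩) (Or.inl h₂'))
  · exact (hx.not_apexClass_of_swap hst hf' (by simpa using hf)).elim

theorem LinkedUpToSwap.trans [Std.Refl r] {e f g : X × X} (h₁ : LinkedUpToSwap r s t e f)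
    (h₂ : LinkedUpToSwap r s t f g) : LinkedUpToSwap r s t e g := by
  rcases h₁ with h₁ | h₁ <;> rcases h₂ with h₂ | h₂
  · exact Or.inl (h₁.trans hst h₂)
  · exact h₁.swap_trans hst h₂
  · simpa [LinkedUpToSwap, or_comm] using h₁.swap_trans hst (g := g.swap) (by simpa using h₂)
  · exact Or.inr (h₁.trans hst h₂)

theorem ClassAsymm.not_linked_swap [Std.Refl r] (hA : ClassAsymm r) {q : X × X}
    (hq : Incomparable r q) : ¬ Linked r s t q q.swap := by
  rintro (h | ⟨x, hx, h₁, h₂⟩)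
  · exact hA q hq h
  · exact hx.not_apexClass_of_swap hst h₁ h₂

theorem ClassAsymm.classAsymm_addClass [Std.Refl r] (hA : ClassAsymm r) :
    ClassAsymm (addClass r (s, t)) := by
  intro q hq hqq
  have hlinked {e : X × X} (he : SameClass (addClass r (s, t)) q e) :
      LinkedUpToSwap r s t q e := by
    induction he with
    | refl => exact Or.inl (Or.inl .refl)
    | tail _ hstep ih => exact ih.trans hst (linkedUpToSwap_of_forcing hstep)
  have hq' := (incomparable_addClass_iff.mp hq).1
  rcases hlinked hqq with h | h
  · exact hA.not_linked_swap hst hq' h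
  · exact hA.not_linked_swap hst hq' (by simpa using h.symm)

end Apex

/-- A transitive orientation of the incomparability graph of `r`. -/
structure IsTransOrientation (r : X → X → Prop) (S : X × X → Prop) : Prop where
  incomparable : ∀ {p}, S p → Incomparable r p
  total : ∀ {p}, Incomparable r p → S p ∨ S p.swap
  trans : ∀ {x y z}, S (x, y) → S (y, z) → S (x, z)

namespace IsTransOrientation

variable {S : X × X → Prop} (hS : IsTransOrientation r S)
include hS

theorem not_swap [Std.Refl r] {p : X × X} (h : S p) : ¬ S p.swap :=
  fun h' => (hS.incomparable (hS.trans h h')).1 (refl_of r _)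

theorem swap : IsTransOrientation r (fun p => S p.swap) :=
  ⟨fun h => (hS.incomparable h).swap, fun hp => (hS.total hp).symm, fun h₁ h₂ => hS.trans h₂ h₁⟩

theorem sup_trans [IsTrans X r] {x y z : X} (h₁ : r x y ∨ S (x, y)) (h₂ : r y z ∨ S (y, z)) :
    r x z ∨ S (x, z) := by
  rcases h₁ with h₁ | h₁ <;> rcases h₂ with h₂ | h₂
  · exact Or.inl (trans_of r h₁ h₂)
  · by_contra! h
    have hyz := hS.incomparable h₂
    have hzx := (hS.total (p := (x, z))
      ⟨h.1, fun hzx => hyz.2 (trans_of r hzx h₁)⟩).resolve_left h.2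
    exact (hS.incomparable (hS.trans h₂ hzx)).2 h₁
  · by_contra! h
    have hxy := hS.incomparable h₁
    have hzx := (hS.total (p := (x, z))
      ⟨h.1, fun hzx => hxy.2 (trans_of r h₂ hzx)⟩).resolve_left h.2
    exact (hS.incomparable (hS.trans hzx h₁)).2 h₂
  · exact Or.inr (hS.trans h₁ h₂)

theorem isPartialOrder_sup [IsPartialOrder X r] :
    IsPartialOrder X (fun x y => r x y ∨ S (x, y)) where
  refl x := Or.inl (refl_of r x)
  trans _ _ _ := hS.sup_trans
  antisymm _ _ := by
    rintro (h | h) (h' | h')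
    · exact antisymm_of r h h'
    · exact ((hS.incomparable h').2 h).elim
    · exact ((hS.incomparable h).2 h').elim
    · exact (hS.not_swap h h').elim

theorem exists_linearOrders [IsPartialOrder X r] :
    ∃ L₁ L₂ : X → X → Prop, IsLinearOrder X L₁ ∧ IsLinearOrder X L₂ ∧
      (∀ x y, r x y → L₁ x y) ∧ (∀ x y, r x y → L₂ x y) ∧ ∀ x y, r x y ↔ (L₁ x y ∧ L₂ x y) := by
  have := hS.isPartialOrder_sup
  have : IsPartialOrder X (fun x y => r x y ∨ S (y, x)) := hS.swap.isPartialOrder_sup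
  obtain ⟨L₁, hL₁, h₁⟩ := extend_partialOrder (fun x y => r x y ∨ S (x, y))
  obtain ⟨L₂, hL₂, h₂⟩ := extend_partialOrder (fun x y => r x y ∨ S (y, x))
  refine ⟨L₁, L₂, hL₁, hL₂, fun x y h => h₁ _ _ (Or.inl h), fun x y h => h₂ _ _ (Or.inl h),
    fun x y => ⟨fun h => ⟨h₁ _ _ (Or.inl h), h₂ _ _ (Or.inl h)⟩, fun ⟨hx₁, hx₂⟩ => ?_⟩⟩
  by_contra hxy
  suffices x = y from hxy (this ▸ refl_of r x)
  by_cases hyx : r y x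
  · exact antisymm_of L₁ hx₁ (h₁ _ _ (Or.inl hyx))
  rcases hS.total (p := (x, y)) ⟨hxy, hyx⟩ with h | h
  · exact antisymm_of L₂ hx₂ (h₂ _ _ (Or.inr h))
  · exact antisymm_of L₁ hx₁ (h₁ _ _ (Or.inr h))

end IsTransOrientation

theorem IsTransOrientation.of_addClass [IsPartialOrder X r] (hA : ClassAsymm r) {s t : X}
    (hst : Incomparable r (s, t)) {S' : X × X → Prop}
    (hS' : IsTransOrientation (addClass r (s, t)) S') :
    IsTransOrientation r (fun p => SameClass r p (s, t) ∨ S' p) := by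
  have hinc {e : X × X} (he : SameClass r e (s, t)) := he.incomparable_of_right hst
  have hinc' {e : X × X} (he : S' e) := incomparable_addClass_iff.mp (hS'.incomparable he)
  have := isPartialOrder_addClass hA hst
  refine ⟨?_, fun {p} hp => ?_, ?_⟩
  · rintro p (hp | hp)
    exacts [hinc hp, (hinc' hp).1]
  · by_cases h₁ : SameClass r p (s, t)
    · exact Or.inl (Or.inl h₁)
    by_cases h₂ : SameClass r p.swap (s, t)
    · exact Or.inr (Or.inl h₂)
    exact (hS'.total (incomparable_addClass_iff.mpr ⟨hp, h₁, h₂⟩)).imp Or.inr Or.inr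
  · rintro x y z (hxy | hxy) (hyz | hyz)
    · exact Or.inl ((hA.sameClass_of_chain (hinc hxy) (hxy.trans hyz.symm)).symm.trans hxy)
    · rcases hS'.sup_trans (Or.inl (Or.inr hxy)) (Or.inr hyz) with (h | h) | h
      · have hf : SameClass r (y, z) (y, x) :=
          SameClass.symm (.single (Forcing.of_fst (hinc hxy).swap (hinc' hyz).1 (Or.inl h)))
        exact ((hinc' hyz).2.2 ((SameClass.swap hf).trans hxy)).elim
      · exact Or.inl h
      · exact Or.inr h
    · rcases hS'.sup_trans (Or.inr hxy) (Or.inl (Or.inr hyz)) with (h | h) | h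
      · have hf : SameClass r (x, y) (z, y) :=
          .single (Forcing.of_snd (hinc' hxy).1 (hinc hyz).swap (Or.inl h))
        exact ((hinc' hxy).2.2 ((SameClass.swap hf).trans hyz)).elim
      · exact Or.inl h
      · exact Or.inr h
    · exact Or.inr (hS'.trans hxy hyz)

theorem ClassAsymm.exists_isTransOrientation [Finite X] [IsPartialOrder X r]
    (hA : ClassAsymm r) : ∃ S, IsTransOrientation r S := by
  induction h : {p : X × X | Incomparable r p}.ncard using Nat.strong_induction_on
    generalizing r with
  | _ n ih =>
  by_cases hex : ∃ p, Incomparable r p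
  · obtain ⟨⟨s, t⟩, hst⟩ := hex
    have := isPartialOrder_addClass hA hst
    have hlt : {p : X × X | Incomparable (addClass r (s, t)) p}.ncard < n :=
      h ▸ Set.ncard_lt_ncard ⟨fun p hp => (incomparable_addClass_iff.mp hp).1,
        fun hsub => (incomparable_addClass_iff.mp (hsub hst)).2.1 .refl⟩
    obtain ⟨S', hS'⟩ := ih _ hlt (hA.classAsymm_addClass hst) rfl
    exact ⟨_, hS'.of_addClass hA hst⟩
  · simp only [not_exists] at hex
    exact ⟨fun _ => False, fun h => h.elim, fun hp => (hex _ hp).elim, fun h => h.elim⟩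

end Gallai

/-- tig(X,≤) as a graph on all of `X × X`, in which comparable pairs are isolated. -/
def tig (X : Type*) [PartialOrder X] : SimpleGraph (X × X) where
  Adj p q := p ∈ IncPairs X ∧ q ∈ IncPairs X ∧ Incomp p q
  symm := ⟨fun _ _ ⟨hp, hq, h⟩ => ⟨hq, hp, h.2, h.1⟩⟩
  loopless := ⟨fun _ ⟨hp, _, h⟩ => hp.2 h.1⟩

section Tig

variable {X : Type*} [PartialOrder X]

theorem tig_adj {p q : X × X} :
    (tig X).Adj p q ↔ p ∈ IncPairs X ∧ q ∈ IncPairs X ∧ Incomp p q :=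
  Iff.rfl

theorem tig_adj_swap {p : X × X} (hp : p ∈ IncPairs X) : (tig X).Adj p p.swap :=
  tig_adj.mpr ⟨hp, ⟨hp.2, hp.1⟩, le_rfl, le_rfl⟩

theorem exists_tig_walk_of_forcing {p q : X × X} (h : Gallai.Forcing (· ≤ ·) p q) :
    ∃ w : (tig X).Walk p q, w.length = 2 := by
  suffices ∃ v, (tig X).Adj p v ∧ (tig X).Adj v q from
    let ⟨_, h₁, h₂⟩ := this; ⟨.cons h₁ (.cons h₂ .nil), rfl⟩
  obtain ⟨a, b⟩ := p
  obtain ⟨c, d⟩ := q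
  obtain ⟨hp, hq, ⟨h₁, hcmp⟩ | ⟨h₂, hcmp⟩⟩ := h
  · obtain rfl : a = c := h₁
    rcases hcmp with hbd | hdb
    · exact ⟨_, tig_adj.mpr ⟨hp, hq.swap, le_rfl, hbd⟩, tig_adj_swap hq.swap⟩
    · exact ⟨_, tig_adj_swap hp, tig_adj.mpr ⟨hp.swap, hq, hdb, le_rfl⟩⟩
  · obtain rfl : b = d := h₂
    rcases hcmp with hac | hca
    · exact ⟨_, tig_adj_swap hp, tig_adj.mpr ⟨hp.swap, hq, le_rfl, hac⟩⟩
    · exact ⟨_, tig_adj.mpr ⟨hp, hq.swap, hca, le_rfl⟩, tig_adj_swap hq.swap⟩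

theorem exists_even_tig_walk_of_sameClass {p q : X × X} (h : Gallai.SameClass (· ≤ ·) p q) :
    ∃ w : (tig X).Walk p q, Even w.length := by
  induction h with
  | refl => exact ⟨.nil, ⟨0, rfl⟩⟩
  | tail _ hstep ih =>
    obtain ⟨w, hw⟩ := ih
    obtain ⟨w', hw'⟩ := exists_tig_walk_of_forcing hstep
    exact ⟨w.append w', by rw [SimpleGraph.Walk.length_append, hw']; exact hw.add even_two⟩

theorem exists_odd_tig_loop (h : ¬ Gallai.ClassAsymm (fun x y : X => x ≤ y)) :
    ∃ p, ∃ w : (tig X).Walk p p, Odd w.length := by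
  simp only [Gallai.ClassAsymm, not_forall, not_not] at h
  obtain ⟨p, hp, hpp⟩ := h
  obtain ⟨w, hw⟩ := exists_even_tig_walk_of_sameClass hpp
  exact ⟨p, w.concat (tig_adj_swap hp).symm, by
    rw [SimpleGraph.Walk.length_concat]; exact hw.add_one⟩

end Tig

/-- if a finite poset does not have order dimension at most 2 (it is
not the intersection of two linear extensions, i.e., dimension ≥ 3), then tig(X,≤)
contains an odd cycle. -/
theorem stmt_18 {X : Type*} [Fintype X] [PartialOrder X]
    (hdim : ¬ ∃ L1 L2 : X → X → Prop,
        IsLinearOrder X L1 ∧ IsLinearOrder X L2 ∧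
        (∀ x y : X, x ≤ y → L1 x y) ∧ (∀ x y : X, x ≤ y → L2 x y) ∧
        ∀ x y : X, x ≤ y ↔ (L1 x y ∧ L2 x y)) :
    ∃ n : ℕ, Odd n ∧ ∃ w : ZMod n → X × X, Function.Injective w ∧
      (∀ i, w i ∈ IncPairs X) ∧ ∀ i, Incomp (w i) (w (i + 1)) := by
  by_cases hA : Gallai.ClassAsymm (fun x y : X => x ≤ y)
  · obtain ⟨S, hS⟩ := hA.exists_isTransOrientation
    exact (hdim hS.exists_linearOrders).elim
  · obtain ⟨p, w, hw⟩ := exists_odd_tig_loop hA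
    obtain ⟨n, hn, c, hc, hadj⟩ := w.exists_injective_odd_cycle hw
    exact ⟨n, hn, c, hc, fun i => (tig_adj.mp (hadj i)).1,
      fun i => (tig_adj.mp (hadj i)).2.2⟩
end
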